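/- arXiv:2412.11332 — 3 statements merged into one kernel-verified Lean document; each statement's English description precedes it below -/
import Mathlib

section
/- Let $\Xi, \Upsilon \subset K^n$ be finitely generated rank-$n$ $\mathcal{O}$-modules. Then duality reverses the module index: $[\Upsilon^* : \Xi^*]_{\mathcal{O}} = \overline{[\Xi : \Upsilon]}_{\mathcal{O}}$, where the bar denotes the nontrivial automorphism of $K$ applied to the fractional ideal. -/
open Complex NumberField
open scoped BigOperators

/-- The pairing `e(x|y) = e^{2πi Tr_{K/ℚ}(∑ᵢ xᵢ ȳᵢ)}` on `Kⁿ × Kⁿ`. -/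
noncomputable def epairK (K : Type*) [Field K] [NumberField K] (σ : K ≃+* K)
    {n : ℕ} (x y : Fin n → K) : ℂ :=
  Complex.exp (2 * Real.pi * Complex.I *
    ((Algebra.trace ℚ K (∑ i, x i * σ (y i)) : ℚ) : ℂ))

/-- The dual of an `𝒪`-module `Ξ ⊂ Kⁿ` with respect to `e(·|·)`. -/
noncomputable def dualMod (K : Type*) [Field K] [NumberField K] (σ : K ≃+* K)
    {n : ℕ} (Ξ : Submodule (𝓞 K) (Fin n → K)) : Set (Fin n → K) :=
  {v | ∀ x ∈ Ξ, epairK K σ x v = 1}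

/-- The module index `[Ξ : Υ]_𝒪` of two rank-`n` `𝒪`-modules in `Kⁿ`: the fractional
ideal generated by the determinants of `K`-endomorphisms of `Kⁿ` mapping `Ξ` into `Υ`. -/
noncomputable def moduleIndex (K : Type*) [Field K] [NumberField K] {n : ℕ}
    (Ξ Υ : Submodule (𝓞 K) (Fin n → K)) : Submodule (𝓞 K) K :=
  Submodule.span (𝓞 K)
    {d : K | ∃ f : (Fin n → K) →ₗ[K] (Fin n → K),
      (∀ x ∈ Ξ, f x ∈ Υ) ∧ d = LinearMap.det f}

/-!
The `σ`-adjoint `f ↦ f*` (the transpose of the `σ`-conjugated matrix) satisfies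
`e(f x | y) = e(x | f* y)` and `det f* = σ (det f)`. Hence every `f` mapping `Ξ` into `Υ` yields
`f*` mapping `Υ*` into `Ξ*`, and conversely every `g` mapping `Υ*` into `Ξ*` yields `g*` mapping
`Ξ ⊆ Ξ**` into `Υ** = Υ`. So the determinants generating `[Υ* : Ξ*]` are exactly the
`σ`-conjugates of those generating `[Ξ : Υ]`. Biduality `Υ** = Υ` holds because `Υ` is a
`ℤ`-lattice in the `ℚ`-space `Kⁿ` and `e(x|y) = 1` says that a nondegenerate symmetric
`ℚ`-bilinear trace form takes an integer value at `(x, y)`.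
-/

namespace LinearMap.BilinForm

variable {R S M : Type*} [CommRing R] [IsDomain R] [IsPrincipalIdealRing R] [Field S]
  [Algebra R S] [IsFractionRing R S] [AddCommGroup M] [Module R M] [Module S M]
  [IsScalarTower R S M]

lemma dualSubmodule_dualSubmodule_of_isLattice {B : LinearMap.BilinForm S M}
    (hB : B.Nondegenerate) (hBs : B.IsSymm) (L : Submodule R M) [L.IsLattice S] :
    B.dualSubmodule (B.dualSubmodule L) = L := by
  let b := Module.Free.chooseBasis R L
  have hb : ⇑(b.extendOfIsLattice S) = L.subtype ∘ b :=
    funext (b.extendOfIsLattice_apply S)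
  have hL : Submodule.span R (Set.range (b.extendOfIsLattice S)) = L := by
    rw [hb, Set.range_comp, ← Submodule.map_span, b.span_eq, Submodule.map_top,
      Submodule.range_subtype]
  rw [← hL]
  exact dualSubmodule_dualSubmodule_of_basis B hB hBs _

end LinearMap.BilinForm

lemma Submodule.isLattice_restrictScalars_int {K V : Type*} [Field K] [NumberField K]
    [AddCommGroup V] [Module K V] [Module ℚ V] [IsScalarTower ℚ K V] [Module (𝓞 K) V]
    [IsScalarTower (𝓞 K) K V] (Υ : Submodule (𝓞 K) V) (hfg : Υ.FG)
    (hrk : Submodule.span K (Υ : Set V) = ⊤) :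
    (Υ.restrictScalars ℤ).IsLattice ℚ where
  fg := hfg.restrictScalars
  span_eq_top := by
    have hO : Submodule.span ℚ (Set.range (integralBasis K)) = ⊤ := (integralBasis K).span_eq
    rw [eq_top_iff, ← Submodule.restrictScalars_top ℚ K V, ← hrk,
      ← Submodule.span_smul_of_span_eq_top hO]
    refine Submodule.span_le.mpr ?_
    rintro _ ⟨_, ⟨i, rfl⟩, v, hv, rfl⟩
    refine Submodule.subset_span ?_
    simp only [integralBasis_apply, algebraMap_smul]
    exact Υ.smul_mem _ hv

section ConjTraceForm

variable {K : Type*} [Field K] [CharZero K] (σ : K ≃+* K) {ι : Type*} [Fintype ι]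

lemma trace_sum_mul_conj_comm (hσ : Function.Involutive σ) (x y : ι → K) :
    Algebra.trace ℚ K (∑ i, x i * σ (y i)) = Algebra.trace ℚ K (∑ i, y i * σ (x i)) := by
  rw [← Algebra.trace_eq_of_algEquiv σ.toRatAlgEquiv, RingEquiv.coe_toRatAlgEquiv, map_sum]
  simp only [map_mul, hσ _, mul_comm]

variable (ι) in
noncomputable def conjTraceForm : LinearMap.BilinForm ℚ (ι → K) :=
  ∑ i, (Algebra.traceForm ℚ K).compl₁₂ (LinearMap.proj i)
    (σ.toRatAlgEquiv.toLinearMap ∘ₗ LinearMap.proj i)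

lemma conjTraceForm_apply (x y : ι → K) :
    conjTraceForm σ ι x y = Algebra.trace ℚ K (∑ i, x i * σ (y i)) := by
  simp [conjTraceForm, map_sum]

lemma conjTraceForm_isSymm (hσ : Function.Involutive σ) : (conjTraceForm σ ι).IsSymm :=
  ⟨fun x y => by simp only [conjTraceForm_apply, trace_sum_mul_conj_comm σ hσ x y]⟩

lemma conjTraceForm_nondegenerate [FiniteDimensional ℚ K] [DecidableEq ι]
    (hσ : Function.Involutive σ) :
    (conjTraceForm σ ι).Nondegenerate := by
  refine ((conjTraceForm_isSymm σ hσ).isRefl.nondegenerate_iff_separatingLeft).mpr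
    fun x hx => funext fun j => (traceForm_nondegenerate ℚ K).1 (x j) fun c => ?_
  simpa [conjTraceForm_apply, Pi.single_apply, apply_ite σ] using
    hx (Pi.single j (σ.symm c))

end ConjTraceForm

lemma Complex.exp_two_pi_I_mul_ratCast_eq_one_iff (q : ℚ) :
    Complex.exp (2 * Real.pi * Complex.I * q) = 1 ↔ q ∈ (1 : Submodule ℤ ℚ) := by
  simp only [Complex.exp_eq_one_iff, Submodule.mem_one, algebraMap_int_eq, eq_intCast]
  refine exists_congr fun m => ?_
  rw [mul_comm, mul_left_inj' Complex.two_pi_I_ne_zero]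
  exact_mod_cast eq_comm

section DualMod

variable {K : Type*} [Field K] [NumberField K] {σ : K ≃+* K} {n : ℕ}

lemma epairK_comm (hσ : Function.Involutive σ) (x y : Fin n → K) :
    epairK K σ x y = epairK K σ y x := by
  rw [epairK, epairK, trace_sum_mul_conj_comm σ hσ]

lemma epairK_eq_one_iff (x y : Fin n → K) :
    epairK K σ x y = 1 ↔ conjTraceForm σ (Fin n) x y ∈ (1 : Submodule ℤ ℚ) := by
  rw [epairK, conjTraceForm_apply, Complex.exp_two_pi_I_mul_ratCast_eq_one_iff]

lemma coe_dualSubmodule_conjTraceForm (hσ : Function.Involutive σ)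
    (M : Submodule (𝓞 K) (Fin n → K)) :
    ((conjTraceForm σ (Fin n)).dualSubmodule (M.restrictScalars ℤ) : Set (Fin n → K)) =
      dualMod K σ M := by
  ext v
  simp only [SetLike.mem_coe, LinearMap.BilinForm.mem_dualSubmodule,
    Submodule.restrictScalars_mem, dualMod, Set.mem_ofPred_eq, epairK_eq_one_iff,
    (conjTraceForm_isSymm σ hσ).eq v]

lemma subset_dualMod_dualMod (hσ : Function.Involutive σ)
    {Ξ Ξd : Submodule (𝓞 K) (Fin n → K)}
    (hΞd : (Ξd : Set (Fin n → K)) = dualMod K σ Ξ) :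
    (Ξ : Set (Fin n → K)) ⊆ dualMod K σ Ξd := by
  intro x hx v hv
  rw [← SetLike.mem_coe, hΞd] at hv
  rw [epairK_comm hσ]
  exact hv x hx

lemma dualMod_dualMod (hσ : Function.Involutive σ)
    {Υ Υd : Submodule (𝓞 K) (Fin n → K)}
    (hrk : Submodule.span K (Υ : Set (Fin n → K)) = ⊤) (hfg : Υ.FG)
    (hΥd : (Υd : Set (Fin n → K)) = dualMod K σ Υ) :
    dualMod K σ Υd = Υ := by
  have := Υ.isLattice_restrictScalars_int hfg hrk
  have hΥd' : Υd.restrictScalars ℤ =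
      (conjTraceForm σ (Fin n)).dualSubmodule (Υ.restrictScalars ℤ) :=
    SetLike.ext' (by rw [coe_dualSubmodule_conjTraceForm hσ, ← hΥd]; rfl)
  rw [← coe_dualSubmodule_conjTraceForm hσ, hΥd',
    LinearMap.BilinForm.dualSubmodule_dualSubmodule_of_isLattice
      (conjTraceForm_nondegenerate σ hσ) (conjTraceForm_isSymm σ hσ)]
  rfl

end DualMod

section ConjAdjoint

open Matrix

variable {K : Type*} [Field K] (σ : K ≃+* K) {ι : Type*} [Fintype ι] [DecidableEq ι]

noncomputable def conjAdjoint (f : (ι → K) →ₗ[K] (ι → K)) : (ι → K) →ₗ[K] (ι → K) :=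
  toLin' ((LinearMap.toMatrix' f).map σ)ᵀ

lemma sum_apply_mul_conj_conjAdjoint (hσ : Function.Involutive σ)
    (f : (ι → K) →ₗ[K] (ι → K)) (x y : ι → K) :
    ∑ i, f x i * σ (y i) = ∑ i, x i * σ (conjAdjoint σ f y i) := by
  conv_lhs => rw [← toLin'_toMatrix' f]
  simp only [conjAdjoint, toLin'_apply, mulVec, dotProduct, transpose_apply, map_apply,
    Finset.sum_mul, Finset.mul_sum, map_sum, map_mul, hσ _]
  rw [Finset.sum_comm]
  exact Finset.sum_congr rfl fun i _ => Finset.sum_congr rfl fun j _ => by ring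

lemma det_conjAdjoint (f : (ι → K) →ₗ[K] (ι → K)) :
    LinearMap.det (conjAdjoint σ f) = σ (LinearMap.det f) := by
  rw [conjAdjoint, LinearMap.det_toLin', det_transpose, ← LinearMap.det_toMatrix' f]
  exact (RingHom.map_det (σ : K →+* K) _).symm

end ConjAdjoint

lemma mapsTo_conjAdjoint_dualMod {K : Type*} [Field K] [NumberField K] {σ : K ≃+* K} {n : ℕ}
    (hσ : Function.Involutive σ) {Ξ Υ : Submodule (𝓞 K) (Fin n → K)}
    {f : (Fin n → K) →ₗ[K] (Fin n → K)} (hf : Set.MapsTo f Ξ Υ) :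
    Set.MapsTo (conjAdjoint σ f) (dualMod K σ Υ) (dualMod K σ Ξ) := by
  intro v hv x hx
  rw [epairK, ← sum_apply_mul_conj_conjAdjoint σ hσ]
  exact hv (f x) (hf hx)

lemma NumberField.RingOfIntegers.coe_span_image_ringEquiv {K : Type*} [Field K]
    (σ : K ≃+* K) (S : Set K) :
    (Submodule.span (𝓞 K) (σ '' S) : Set K) = σ '' Submodule.span (𝓞 K) S := by
  have := RingHomInvPair.of_ringEquiv (mapRingEquiv σ)
  let σₛₗ : K →ₛₗ[(mapRingEquiv σ : 𝓞 K →+* 𝓞 K)] K :=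
    { toFun := σ
      map_add' := map_add σ
      map_smul' := fun c x => by simp [Algebra.smul_def] }
  exact congrArg SetLike.coe (Submodule.map_span σₛₗ S).symm

theorem moduleIndex_dual_eq_conj_general
    (K : Type*) [Field K] [NumberField K]
    (ι : K →+* ℂ)
    (σ : K ≃+* K) (hσι : ∀ x : K, ι (σ x) = (starRingEnd ℂ) (ι x))
    (n : ℕ)
    (Ξ Υ : Submodule (𝓞 K) (Fin n → K))
    (hΥrk : Submodule.span K (Υ : Set (Fin n → K)) = ⊤) (hΥfg : Υ.FG)
    (Ξd Υd : Submodule (𝓞 K) (Fin n → K))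
    (hΞd : (Ξd : Set (Fin n → K)) = dualMod K σ Ξ)
    (hΥd : (Υd : Set (Fin n → K)) = dualMod K σ Υ) :
    ((moduleIndex K Υd Ξd : Submodule (𝓞 K) K) : Set K)
      = (fun x : K => σ x) '' ((moduleIndex K Ξ Υ : Submodule (𝓞 K) K) : Set K) := by
  have hσ : Function.Involutive σ := fun x => ι.injective (by simp [hσι])
  have hdets : {d : K | ∃ g : (Fin n → K) →ₗ[K] (Fin n → K),
        (∀ x ∈ Υd, g x ∈ Ξd) ∧ d = LinearMap.det g} =
      σ '' {d : K | ∃ f : (Fin n → K) →ₗ[K] (Fin n → K),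
        (∀ x ∈ Ξ, f x ∈ Υ) ∧ d = LinearMap.det f} := by
    ext d
    constructor
    · rintro ⟨g, hg, rfl⟩
      have hg' : Set.MapsTo (conjAdjoint σ g) Ξ Υ := by
        have := mapsTo_conjAdjoint_dualMod hσ (f := g) hg
        rw [dualMod_dualMod hσ hΥrk hΥfg hΥd] at this
        exact this.mono_left (subset_dualMod_dualMod hσ hΞd)
      exact ⟨_, ⟨conjAdjoint σ g, hg', rfl⟩, by rw [det_conjAdjoint, hσ]⟩
    · rintro ⟨_, ⟨f, hf, rfl⟩, rfl⟩
      have hf' : Set.MapsTo (conjAdjoint σ f) Υd Ξd := by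
        rw [hΥd, hΞd]
        exact mapsTo_conjAdjoint_dualMod hσ hf
      exact ⟨conjAdjoint σ f, hf', (det_conjAdjoint σ f).symm⟩
  rw [moduleIndex, moduleIndex, hdets, NumberField.RingOfIntegers.coe_span_image_ringEquiv]

/-- Duality reverses the module index:
`[Υ* : Ξ*]_𝒪 = conj([Ξ : Υ]_𝒪)`. -/
theorem moduleIndex_dual_eq_conj
    (K : Type*) [Field K] [NumberField K]
    (hdeg : Module.finrank ℚ K = 2)
    (ι : K →+* ℂ) (him : ∃ x : K, (ι x).im ≠ 0)
    (σ : K ≃+* K) (hσι : ∀ x : K, ι (σ x) = (starRingEnd ℂ) (ι x))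
    (n : ℕ)
    (Ξ Υ : Submodule (𝓞 K) (Fin n → K))
    (hΞrk : Submodule.span K (Ξ : Set (Fin n → K)) = ⊤) (hΞfg : Ξ.FG)
    (hΥrk : Submodule.span K (Υ : Set (Fin n → K)) = ⊤) (hΥfg : Υ.FG)
    (Ξd Υd : Submodule (𝓞 K) (Fin n → K))
    (hΞd : (Ξd : Set (Fin n → K)) = dualMod K σ Ξ)
    (hΥd : (Υd : Set (Fin n → K)) = dualMod K σ Υ) :
    ((moduleIndex K Υd Ξd : Submodule (𝓞 K) K) : Set K)
      = (fun x : K => σ x) '' ((moduleIndex K Ξ Υ : Submodule (𝓞 K) K) : Set K) :=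
  moduleIndex_dual_eq_conj_general K ι σ hσι n Ξ Υ hΥrk hΥfg Ξd Υd hΞd hΥd
end

section
/- Let $F/K$ be a degree-$n$ extension of number fields and $\mathfrak{g}$ an integral ideal of $K$ with $n! < N_{K/\mathbb{Q}}(\mathfrak{g})$. Given finitely many elements $x_{i,\pi} \in F \setminus \{0\}$ indexed by $i = 1,\dots,n$ and permutations $\pi \in S_{n-1}$ (so at most $n \cdot (n-1)! = n!$ elements), there exists $\theta \in \mathcal{O}_F$ such that $0 \notin \mathrm{Tr}_{F/K}\big((\theta + \mathfrak{g}\mathcal{O}_F)\, x_{i,\pi}\big)$ for all $i$ and $\pi$. (That is, $\theta + \mathfrak{g}\mathcal{O}_F$ avoids the trace-kernel translates simultaneously.) -/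
/-!
Fix `x ≠ 0`. The residues `θ ∈ 𝒪_F` for which `Tr((θ + 𝔤𝒪_F) x)` contains `0` form the
subgroup `T_x = {θ : Tr(θx) ∈ Tr(x𝔤𝒪_F)}` of `𝒪_F` (`traceCongruenceSubmodule`). Scaling `x`
by a nonzero element of `K` does not change `T_x`, so we may take `x` integral; then
`𝔞 = Tr(x𝒪_F)` is a nonzero ideal of `𝒪_K` (nondegeneracy of the trace form),
`Tr(x𝔤𝒪_F) = 𝔤𝔞`, and `[𝒪_F : T_x] = [𝔞 : 𝔤𝔞] = N(𝔤)`. By B. H. Neumann's lemma, fewer than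
`N(𝔤)` subgroups of index `N(𝔤)` cannot cover `𝒪_F`, and there are at most `n · (n - 1)! = n!`
of them.
-/

open NumberField
open scoped Pointwise

theorem AddSubgroup.exists_forall_notMem_of_card_lt_index {G ι : Type*} [AddGroup G] [Fintype ι]
    (H : ι → AddSubgroup G) (hH : ∀ i, Fintype.card ι < (H i).index) :
    ∃ g : G, ∀ i, g ∉ H i := by
  by_contra! hcover
  have hcovers : ⋃ i ∈ Finset.univ, (0 : G) +ᵥ (H i : Set G) = Set.univ :=
    Set.eq_univ_of_forall fun g ↦ by simpa using hcover g
  obtain ⟨i, -, -, hi⟩ := AddSubgroup.exists_index_le_card_of_leftCoset_cover hcovers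
  exact (hH i).not_ge hi

theorem Submodule.index_comap {R M N : Type*} [Ring R] [AddCommGroup M] [AddCommGroup N]
    [Module R M] [Module R N] (f : M →ₗ[R] N) (p : Submodule R N) :
    (p.comap f).toAddSubgroup.index = p.toAddSubgroup.relIndex (LinearMap.range f).toAddSubgroup :=
  AddSubgroup.index_comap p.toAddSubgroup f.toAddMonoidHom

section AbsNorm

variable {S : Type*} [CommRing S] [IsDedekindDomain S] [Module.Free ℤ S] [Module.Finite ℤ S]

theorem Ideal.relIndex_mul_eq_absNorm (𝔤 : Ideal S) {I : Ideal S} (hI : I ≠ ⊥) :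
    (𝔤 * I).toAddSubgroup.relIndex I.toAddSubgroup = absNorm 𝔤 := by
  have h := AddSubgroup.relIndex_mul_index
    (Submodule.toAddSubgroup_mono (mul_le_right : 𝔤 * I ≤ I))
  rw [← absNorm_eq_index, ← absNorm_eq_index, map_mul] at h
  exact Nat.eq_of_mul_eq_mul_right (Nat.pos_of_ne_zero (absNorm_eq_zero_iff.not.mpr hI)) h

theorem Submodule.relIndex_smul_eq_absNorm {K : Type*} [CommRing K] [Algebra S K]
    [FaithfulSMul S K] (𝔤 : Ideal S) {𝔞 : Submodule S K} (h𝔞 : 𝔞 ≤ 1) (h𝔞0 : 𝔞 ≠ ⊥) :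
    (𝔤 • 𝔞).toAddSubgroup.relIndex 𝔞.toAddSubgroup = Ideal.absNorm 𝔤 := by
  obtain ⟨I, rfl⟩ : ∃ I : Ideal S, Submodule.map (Algebra.linearMap S K) I = 𝔞 :=
    ⟨_, map_comap_eq_of_le (one_eq_range (R := S) (A := K) ▸ h𝔞)⟩
  have hI : I ≠ ⊥ := by rintro rfl; simp at h𝔞0
  rw [← map_smul'', Ideal.smul_eq_mul, map_toAddSubgroup, map_toAddSubgroup,
    AddSubgroup.relIndex_map_map_of_injective _ _ (FaithfulSMul.algebraMap_injective S K),
    Ideal.relIndex_mul_eq_absNorm 𝔤 hI]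

end AbsNorm

section TraceCongruence

variable {R K F : Type*} [CommRing R] [Field K] [Algebra R K] [Field F] [Algebra K F]
  [Algebra R F] [IsScalarTower R K F]

variable (K) in
noncomputable def traceMulRight (x : F) : F →ₗ[R] K :=
  ((Algebra.trace K F).comp (LinearMap.mulRight K x)).restrictScalars R

@[simp]
theorem traceMulRight_apply (x y : F) :
    traceMulRight (R := R) K x y = Algebra.trace K F (y * x) := rfl

variable (K) in
noncomputable def traceCongruenceSubmodule (𝔤 : Ideal R) (x : F) :
    Submodule R (integralClosure R F).toSubmodule :=
  ((𝔤 • (integralClosure R F).toSubmodule).map (traceMulRight K x)).comap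
    ((traceMulRight K x).domRestrict (integralClosure R F).toSubmodule)

theorem mem_traceCongruenceSubmodule {𝔤 : Ideal R} {x : F}
    {θ : (integralClosure R F).toSubmodule} :
    θ ∈ traceCongruenceSubmodule K 𝔤 x ↔
      ∃ g ∈ 𝔤 • (integralClosure R F).toSubmodule,
        Algebra.trace K F (g * x) = Algebra.trace K F (θ * x) := Iff.rfl

theorem traceCongruenceSubmodule_smul (𝔤 : Ideal R) (x : F) {c : K} (hc : c ≠ 0) :
    traceCongruenceSubmodule K 𝔤 (c • x) = traceCongruenceSubmodule K 𝔤 x := by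
  ext θ
  simp only [mem_traceCongruenceSubmodule, mul_smul_comm, map_smul, smul_eq_mul,
    mul_right_inj' hc]

theorem mem_traceCongruenceSubmodule_of_trace_eq_zero {𝔤 : Ideal R} {x g : F}
    {θ : (integralClosure R F).toSubmodule} (hg : g ∈ 𝔤 • (integralClosure R F).toSubmodule)
    (h : Algebra.trace K F ((θ + g) * x) = 0) : θ ∈ traceCongruenceSubmodule K 𝔤 x := by
  refine mem_traceCongruenceSubmodule.mpr ⟨-g, Submodule.neg_mem _ hg, ?_⟩
  rw [add_mul, map_add] at h
  rw [neg_mul, map_neg, neg_eq_iff_add_eq_zero, add_comm, h]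

variable [IsFractionRing R K] [FiniteDimensional K F]

theorem map_traceMulRight_le_one [IsIntegrallyClosed R] {x : F} (hx : IsIntegral R x) :
    (integralClosure R F).toSubmodule.map (traceMulRight K x) ≤ 1 := by
  rintro _ ⟨y, hy, rfl⟩
  exact Submodule.mem_one.mpr (IsIntegrallyClosed.isIntegral_iff.mp
    (Algebra.isIntegral_trace ((hy : IsIntegral R y).mul hx)))

theorem map_traceMulRight_ne_bot [IsDomain R] [Algebra.IsSeparable K F] {x : F} (hx : x ≠ 0) :
    (integralClosure R F).toSubmodule.map (traceMulRight K x) ≠ ⊥ := by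
  obtain ⟨y, hy⟩ : ∃ y, Algebra.trace K F (y * x) ≠ 0 := by
    by_contra! h
    exact hx ((traceForm_nondegenerate K F).2 x fun y ↦ by simpa using h y)
  obtain ⟨d, hd, hdy⟩ := exists_integral_multiples R K {y}
  refine (Submodule.ne_bot_iff _).mpr ⟨_, ⟨d • y, hdy y (Finset.mem_singleton_self y), rfl⟩, ?_⟩
  rw [traceMulRight_apply, smul_mul_assoc, ← algebraMap_smul K, map_smul, smul_eq_mul]
  exact mul_ne_zero ((map_ne_zero_iff _ (IsFractionRing.injective R K)).mpr hd) hy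

theorem index_traceCongruenceSubmodule [IsDedekindDomain R] [Module.Free ℤ R]
    [Module.Finite ℤ R] [Algebra.IsSeparable K F] (𝔤 : Ideal R) {x : F} (hx : x ≠ 0) :
    (traceCongruenceSubmodule K 𝔤 x).toAddSubgroup.index = Ideal.absNorm 𝔤 := by
  obtain ⟨d, hd, hdx⟩ := exists_integral_multiples R K {x}
  replace hdx := hdx x (Finset.mem_singleton_self x)
  have hd' : algebraMap R K d ≠ 0 := (map_ne_zero_iff _ (IsFractionRing.injective R K)).mpr hd
  have hdx0 : d • x ≠ 0 := by rw [← algebraMap_smul K]; exact smul_ne_zero hd' hx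
  rw [← traceCongruenceSubmodule_smul 𝔤 x hd', algebraMap_smul, traceCongruenceSubmodule,
    Submodule.index_comap, LinearMap.range_domRestrict, Submodule.map_smul'',
    Submodule.relIndex_smul_eq_absNorm 𝔤 (map_traceMulRight_le_one hdx)
      (map_traceMulRight_ne_bot hdx0)]

end TraceCongruence

theorem exists_theta_avoiding_trace_kernels_general
    (K F : Type*) [Field K] [NumberField K] [Field F] [NumberField F]
    [Algebra K F] [Algebra (𝓞 K) F] [IsScalarTower (𝓞 K) K F]
    (n : ℕ)
    (𝔤 : Ideal (𝓞 K))
    (hcard : Nat.factorial n < Ideal.absNorm 𝔤)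
    (x : Fin n → Equiv.Perm (Fin (n - 1)) → F)
    (hx : ∀ i π, x i π ≠ 0)
    (gOF : Submodule (𝓞 K) F)
    (hgOF : gOF = 𝔤 • (Subalgebra.toSubmodule (integralClosure (𝓞 K) F))) :
    ∃ θ : F, θ ∈ integralClosure (𝓞 K) F ∧
      ∀ (i : Fin n) (π : Equiv.Perm (Fin (n - 1))) (g : F),
        g ∈ gOF → Algebra.trace K F ((θ + g) * x i π) ≠ 0 := by
  have : FiniteDimensional K F := Module.Finite.right ℚ K F
  have hcard_le : n * (n - 1).factorial ≤ n.factorial := by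
    cases n <;> simp [Nat.factorial_succ]
  obtain ⟨θ, hθ⟩ := AddSubgroup.exists_forall_notMem_of_card_lt_index
    (fun p : Fin n × Equiv.Perm (Fin (n - 1)) ↦
      (traceCongruenceSubmodule K 𝔤 (x p.1 p.2)).toAddSubgroup)
    fun p ↦ by
      rw [index_traceCongruenceSubmodule 𝔤 (hx p.1 p.2)]
      simpa [Fintype.card_perm] using hcard_le.trans_lt hcard
  exact ⟨θ, θ.2, fun i π g hg h ↦
    hθ (i, π) (mem_traceCongruenceSubmodule_of_trace_eq_zero (hgOF ▸ hg) h)⟩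

/-- Let `F/K` be a degree-`n` extension of number fields and `𝔤` an
integral ideal of `K` with `n! < N_{K/ℚ}(𝔤)`.  Given nonzero elements
`x_{i,π} ∈ F` indexed by `i = 1,…,n` and `π ∈ S_{n-1}`, there exists `θ ∈ 𝒪_F`
such that `0 ∉ Tr_{F/K}((θ + 𝔤𝒪_F)·x_{i,π})` for all `i` and `π`. -/
theorem exists_theta_avoiding_trace_kernels
    (K F : Type*) [Field K] [NumberField K] [Field F] [NumberField F]
    [Algebra K F] [Algebra (𝓞 K) F] [IsScalarTower (𝓞 K) K F]
    (n : ℕ) (hn : Module.finrank K F = n)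
    (𝔤 : Ideal (𝓞 K)) (h𝔤 : 𝔤 ≠ ⊥)
    (hcard : Nat.factorial n < Ideal.absNorm 𝔤)
    (x : Fin n → Equiv.Perm (Fin (n - 1)) → F)
    (hx : ∀ i π, x i π ≠ 0)
    (gOF : Submodule (𝓞 K) F)
    (hgOF : gOF = 𝔤 • (Subalgebra.toSubmodule (integralClosure (𝓞 K) F))) :
    ∃ θ : F, θ ∈ integralClosure (𝓞 K) F ∧
      ∀ (i : Fin n) (π : Equiv.Perm (Fin (n - 1))) (g : F),
        g ∈ gOF → Algebra.trace K F ((θ + g) * x i π) ≠ 0 :=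
  exists_theta_avoiding_trace_kernels_general K F n 𝔤 hcard x hx gOF hgOF
end

section
/- Let $A_1, \dots, A_n \in \Gamma_{\mathfrak{l}}$ (automorphisms of $\mathfrak{l}\mathcal{O}_{(\mathfrak{l})} \times \mathcal{O}_{(\mathfrak{l})}^{n-1}$), and for a tuple $d = (d_1,\dots,d_n)$ with some $d_i \neq 1$, let $i$ be minimal with $d_i \neq 1$, so that for $x$ in the set $X(d)$, the first $d_i - 1 \geq 1$ coordinates of $xA_i$ vanish. Let $\Xi \in W_{n,\mathfrak{l}}$ and $u \in \mathfrak{l}\mathcal{O}_{(\mathfrak{l})} \times \mathcal{O}_{(\mathfrak{l})}^{n-1}$. Then for $x \in \Xi$ with the first coordinate of $(x+u)A_i$ equal to zero, one has $x \in \mathfrak{l}\mathcal{O}_{(\mathfrak{l})}\times\mathcal{O}_{(\mathfrak{l})}^{n-1}$; consequently $X(d) \cap (\Xi + u) = X(d) \cap (\Xi_{\mathfrak{l}} + u)$. -/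
open NumberField
open scoped BigOperators

/-- The localization `𝒪_{(𝔩)} ⊂ K` of `𝒪` at the prime `𝔩`. -/
def locAt (K : Type*) [Field K] [NumberField K] (𝔩 : Ideal (𝓞 K)) : Set K :=
  {x | ∃ a b : 𝓞 K, b ∉ 𝔩 ∧ x * algebraMap (𝓞 K) K b = algebraMap (𝓞 K) K a}

/-- The ideal `𝔩𝒪_{(𝔩)} ⊂ K`. -/
def locAtP (K : Type*) [Field K] [NumberField K] (𝔩 : Ideal (𝓞 K)) : Set K :=
  {x | ∃ a b : 𝓞 K, a ∈ 𝔩 ∧ b ∉ 𝔩 ∧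
    x * algebraMap (𝓞 K) K b = algebraMap (𝓞 K) K a}

/-- The standard module `𝔩𝒪_{(𝔩)} × 𝒪_{(𝔩)}^{n-1} ⊂ Kⁿ`. -/
def stdLat (K : Type*) [Field K] [NumberField K] (n : ℕ) [NeZero n]
    (𝔩 : Ideal (𝓞 K)) : Set (Fin n → K) :=
  {x | x 0 ∈ locAtP K 𝔩 ∧ ∀ i : Fin n, i ≠ 0 → x i ∈ locAt K 𝔩}

/-- `Ξ ∈ W_{n,𝔩}`: a rank-`n` `𝒪`-module with `Ξ ⊗ 𝒪_{(𝔩)} = 𝒪_{(𝔩)}ⁿ`. -/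
def IsWnl (K : Type*) [Field K] [NumberField K] (n : ℕ) (𝔩 : Ideal (𝓞 K))
    (Ξ : Submodule (𝓞 K) (Fin n → K)) : Prop :=
  (∀ x ∈ Ξ, ∀ i, x i ∈ locAt K 𝔩) ∧
  (∀ x : Fin n → K, (∀ i, x i ∈ locAt K 𝔩) → ∃ s : 𝓞 K, s ∉ 𝔩 ∧ s • x ∈ Ξ)

/-! Since `A ∈ Γ_𝔩` is invertible and maps `𝔩𝒪_{(𝔩)} × 𝒪_{(𝔩)}^{n-1}` onto itself, a vector
`v ∈ 𝒪_{(𝔩)}ⁿ` lies in that lattice as soon as `vA` does, i.e. as soon as `(vA)₀ ∈ 𝔩𝒪_{(𝔩)}`.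
Apply this to `v = x + u`: the defining conditions of `X(d)` at `i₀` (with `d i₀ ≠ 0`) make
`(vA_{i₀})₀ = 0`, and then `x = v - u` has first coordinate in `𝔩𝒪_{(𝔩)}`, i.e. `x ∈ Ξ_𝔩`. -/

section Localization

variable {K : Type*} [Field K] [NumberField K] {𝔩 : Ideal (𝓞 K)}

def locAtSubring (hp : 𝔩.IsPrime) : Subring K where
  carrier := locAt K 𝔩
  zero_mem' := ⟨0, 1, hp.one_notMem, by simp⟩
  one_mem' := ⟨1, 1, hp.one_notMem, by simp⟩
  add_mem' := by
    rintro x y ⟨a, b, hb, hxb⟩ ⟨a', b', hb', hyb⟩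
    refine ⟨a * b' + a' * b, b * b', fun h => (hp.mem_or_mem h).elim hb hb', ?_⟩
    simp only [map_mul, map_add]
    linear_combination algebraMap (𝓞 K) K b' * hxb + algebraMap (𝓞 K) K b * hyb
  mul_mem' := by
    rintro x y ⟨a, b, hb, hxb⟩ ⟨a', b', hb', hyb⟩
    refine ⟨a * a', b * b', fun h => (hp.mem_or_mem h).elim hb hb', ?_⟩
    simp only [map_mul]
    linear_combination y * algebraMap (𝓞 K) K b' * hxb + algebraMap (𝓞 K) K a * hyb
  neg_mem' := by
    rintro x ⟨a, b, hb, hxb⟩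
    exact ⟨-a, b, hb, by simp only [map_neg]; linear_combination -hxb⟩

def locAtPAddSubgroup (hp : 𝔩.IsPrime) : AddSubgroup K where
  carrier := locAtP K 𝔩
  zero_mem' := ⟨0, 1, 𝔩.zero_mem, hp.one_notMem, by simp⟩
  add_mem' := by
    rintro x y ⟨a, b, ha, hb, hxb⟩ ⟨a', b', ha', hb', hyb⟩
    refine ⟨a * b' + a' * b, b * b', 𝔩.add_mem (𝔩.mul_mem_right _ ha) (𝔩.mul_mem_right _ ha'),
      fun h => (hp.mem_or_mem h).elim hb hb', ?_⟩
    simp only [map_mul, map_add]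
    linear_combination algebraMap (𝓞 K) K b' * hxb + algebraMap (𝓞 K) K b * hyb
  neg_mem' := by
    rintro x ⟨a, b, ha, hb, hxb⟩
    exact ⟨-a, b, 𝔩.neg_mem_iff.mpr ha, hb, by simp only [map_neg]; linear_combination -hxb⟩

lemma locAtP_subset_locAt : locAtP K 𝔩 ⊆ locAt K 𝔩 :=
  fun _ ⟨a, b, _, hb, h⟩ => ⟨a, b, hb, h⟩

end Localization

section StdLat

variable {K : Type*} [Field K] [NumberField K] {n : ℕ} [NeZero n] {𝔩 : Ideal (𝓞 K)}

def stdLatAddSubgroup (hp : 𝔩.IsPrime) : AddSubgroup (Fin n → K) where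
  carrier := stdLat K n 𝔩
  zero_mem' := ⟨(locAtPAddSubgroup hp).zero_mem, fun _ _ => (locAtSubring hp).zero_mem⟩
  add_mem' := fun hx hy =>
    ⟨(locAtPAddSubgroup hp).add_mem hx.1 hy.1,
      fun i hi => (locAtSubring hp).add_mem (hx.2 i hi) (hy.2 i hi)⟩
  neg_mem' := fun hx =>
    ⟨(locAtPAddSubgroup hp).neg_mem hx.1, fun i hi => (locAtSubring hp).neg_mem (hx.2 i hi)⟩

lemma apply_mem_locAt_of_mem_stdLat {x : Fin n → K} (hx : x ∈ stdLat K n 𝔩) (i : Fin n) :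
    x i ∈ locAt K 𝔩 := by
  rcases eq_or_ne i 0 with rfl | hi
  · exact locAtP_subset_locAt hx.1
  · exact hx.2 i hi

lemma vecMul_mem_stdLat (hp : 𝔩.IsPrime) {A : Matrix (Fin n) (Fin n) K}
    (hAent : ∀ i j, A i j ∈ locAt K 𝔩) {v : Fin n → K} (hv : ∀ i, v i ∈ locAt K 𝔩)
    (hv0 : Matrix.vecMul v A 0 ∈ locAtP K 𝔩) : Matrix.vecMul v A ∈ stdLat K n 𝔩 :=
  ⟨hv0, fun j _ => (locAtSubring hp).sum_mem (t := Finset.univ) fun m _ =>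
    (locAtSubring hp).mul_mem (hv m) (hAent m j)⟩

lemma mem_stdLat_of_vecMul_mem (hp : 𝔩.IsPrime) {A : Matrix (Fin n) (Fin n) K}
    (hAdet : IsUnit A.det) (hAent : ∀ i j, A i j ∈ locAt K 𝔩)
    (hAbij : Set.BijOn (fun x : Fin n → K => Matrix.vecMul x A) (stdLat K n 𝔩) (stdLat K n 𝔩))
    {v : Fin n → K} (hv : ∀ i, v i ∈ locAt K 𝔩) (hv0 : Matrix.vecMul v A 0 ∈ locAtP K 𝔩) :
    v ∈ stdLat K n 𝔩 := by
  obtain ⟨w, hw, hwv⟩ := hAbij.surjOn (vecMul_mem_stdLat hp hAent hv hv0)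
  have hinj := Matrix.vecMul_injective_of_isUnit ((Matrix.isUnit_iff_isUnit_det A).mpr hAdet)
  exact hinj hwv ▸ hw

lemma mem_stdLat_of_vecMul_add_apply_zero_eq_zero (hp : 𝔩.IsPrime)
    {A : Matrix (Fin n) (Fin n) K} (hAdet : IsUnit A.det) (hAent : ∀ i j, A i j ∈ locAt K 𝔩)
    (hAbij : Set.BijOn (fun x : Fin n → K => Matrix.vecMul x A) (stdLat K n 𝔩) (stdLat K n 𝔩))
    {x u : Fin n → K} (hx : ∀ i, x i ∈ locAt K 𝔩) (hu : u ∈ stdLat K n 𝔩)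
    (hxu : Matrix.vecMul (x + u) A 0 = 0) : x ∈ stdLat K n 𝔩 := by
  have hxu_mem : x + u ∈ stdLat K n 𝔩 :=
    mem_stdLat_of_vecMul_mem hp hAdet hAent hAbij
      (fun i => (locAtSubring hp).add_mem (hx i) (apply_mem_locAt_of_mem_stdLat hu i))
      (hxu ▸ (locAtPAddSubgroup hp).zero_mem)
  have hx_mem : (x + u) - u ∈ stdLatAddSubgroup hp := (stdLatAddSubgroup hp).sub_mem hxu_mem hu
  rwa [add_sub_cancel_right] at hx_mem

end StdLat

theorem smoothing_support_identity_general
    (K : Type*) [Field K] [NumberField K]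
    (n : ℕ) [NeZero n]
    (𝔩 : Ideal (𝓞 K)) (h𝔩p : 𝔩.IsPrime)
    (Ξ : Submodule (𝓞 K) (Fin n → K)) (hΞ : IsWnl K n 𝔩 Ξ)
    (Ξl : Submodule (𝓞 K) (Fin n → K))
    (hΞl : (Ξl : Set (Fin n → K)) = {x | x ∈ Ξ ∧ x 0 ∈ locAtP K 𝔩})
    (u : Fin n → K) (hu : u ∈ stdLat K n 𝔩)
    (A : Fin n → Matrix (Fin n) (Fin n) K)
    (hAdet : ∀ k, IsUnit (A k).det)
    (hAent : ∀ k i j, A k i j ∈ locAt K 𝔩)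
    (hAbij : ∀ k, Set.BijOn (fun x : Fin n → K => Matrix.vecMul x (A k))
      (stdLat K n 𝔩) (stdLat K n 𝔩))
    (d : Fin n → Fin n) (i₀ : Fin n)
    (hi₀ : d i₀ ≠ 0) :
    (∀ x : Fin n → K, x ∈ Ξ →
      Matrix.vecMul (x + u) (A i₀) 0 = 0 → x ∈ stdLat K n 𝔩)
    ∧ ({y : Fin n → K |
          (∀ k : Fin n, (∀ j : Fin n, j < d k → ∑ m, y m * A k m j = 0) ∧
            ∑ m, y m * A k m (d k) ≠ 0)}
        ∩ {y | ∃ x ∈ Ξ, y = x + u})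
      = ({y : Fin n → K |
            (∀ k : Fin n, (∀ j : Fin n, j < d k → ∑ m, y m * A k m j = 0) ∧
              ∑ m, y m * A k m (d k) ≠ 0)}
          ∩ {y | ∃ x ∈ Ξl, y = x + u}) := by
  have hmemΞl : ∀ x, x ∈ Ξl ↔ x ∈ Ξ ∧ x 0 ∈ locAtP K 𝔩 := Set.ext_iff.mp hΞl
  have hkey : ∀ x ∈ Ξ, Matrix.vecMul (x + u) (A i₀) 0 = 0 → x ∈ stdLat K n 𝔩 :=
    fun x hx => mem_stdLat_of_vecMul_add_apply_zero_eq_zero h𝔩p (hAdet i₀) (hAent i₀)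
      (hAbij i₀) (hΞ.1 x hx) hu
  refine ⟨hkey, Set.ext fun y => ⟨?_, ?_⟩⟩
  · rintro ⟨hy, x, hx, rfl⟩
    have hxu : Matrix.vecMul (x + u) (A i₀) 0 = 0 :=
      (hy i₀).1 0 (Fin.pos_iff_ne_zero.mpr hi₀)
    exact ⟨hy, x, (hmemΞl x).mpr ⟨hx, (hkey x hx hxu).1⟩, rfl⟩
  · rintro ⟨hy, x, hx, rfl⟩
    exact ⟨hy, x, ((hmemΞl x).mp hx).1, rfl⟩

/-- Let `A₁,…,Aₙ ∈ Γ_𝔩` and let `d` be a tuple with minimal index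
`i₀` such that `d_{i₀} ≠ 1`.  For `u ∈ 𝔩𝒪_{(𝔩)} × 𝒪_{(𝔩)}^{n-1}` and `x ∈ Ξ` with
the first coordinate of `(x+u)A_{i₀}` equal to zero, one has
`x ∈ 𝔩𝒪_{(𝔩)} × 𝒪_{(𝔩)}^{n-1}`; consequently
`X(d) ∩ (Ξ + u) = X(d) ∩ (Ξ_𝔩 + u)`. -/
theorem smoothing_support_identity
    (K : Type*) [Field K] [NumberField K]
    (hdeg : Module.finrank ℚ K = 2)
    (n : ℕ) [NeZero n]
    (𝔩 : Ideal (𝓞 K)) (h𝔩p : 𝔩.IsPrime) (h𝔩 : 𝔩 ≠ ⊥)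
    (Ξ : Submodule (𝓞 K) (Fin n → K)) (hΞ : IsWnl K n 𝔩 Ξ)
    (Ξl : Submodule (𝓞 K) (Fin n → K))
    (hΞl : (Ξl : Set (Fin n → K)) = {x | x ∈ Ξ ∧ x 0 ∈ locAtP K 𝔩})
    (u : Fin n → K) (hu : u ∈ stdLat K n 𝔩)
    (A : Fin n → Matrix (Fin n) (Fin n) K)
    (hAdet : ∀ k, IsUnit (A k).det)
    (hAent : ∀ k i j, A k i j ∈ locAt K 𝔩)
    (hAbij : ∀ k, Set.BijOn (fun x : Fin n → K => Matrix.vecMul x (A k))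
      (stdLat K n 𝔩) (stdLat K n 𝔩))
    (d : Fin n → Fin n) (i₀ : Fin n)
    (hi₀ : d i₀ ≠ 0) (hmin : ∀ j : Fin n, j < i₀ → d j = 0) :
    (∀ x : Fin n → K, x ∈ Ξ →
      Matrix.vecMul (x + u) (A i₀) 0 = 0 → x ∈ stdLat K n 𝔩)
    ∧ ({y : Fin n → K |
          (∀ k : Fin n, (∀ j : Fin n, j < d k → ∑ m, y m * A k m j = 0) ∧
            ∑ m, y m * A k m (d k) ≠ 0)}
        ∩ {y | ∃ x ∈ Ξ, y = x + u})
      = ({y : Fin n → K |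
            (∀ k : Fin n, (∀ j : Fin n, j < d k → ∑ m, y m * A k m j = 0) ∧
              ∑ m, y m * A k m (d k) ≠ 0)}
          ∩ {y | ∃ x ∈ Ξl, y = x + u}) :=
  smoothing_support_identity_general K n 𝔩 h𝔩p Ξ hΞ Ξl hΞl u hu A hAdet hAent hAbij d i₀ hi₀
end
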